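/- Let x, h ∈ ℝ^N with ‖Ah‖₂ ≤ 2ε, where A is an n×N real matrix with restricted isometry constants δ_{ak} and δ_{(a+1)k} (a > 1, ak ∈ ℤ). Let T0 ⊆ {1,…,N} with |T0| = k, let T̃ ⊆ {1,…,N} with |T̃| = ρk, |T̃ ∩ T0| = αρk, and a ≥ (1−α)ρ; set T̃_α = T0 ∩ T̃ and γ = ω + (1−ω)·√(1+ρ−2αρ) for 0 ≤ ω ≤ 1. Suppose the weighted ℓ1 cone constraint holds: ‖(x+h)‖_{1,w} ≤ ‖x‖_{1,w} with w_i = ω on T̃ and 1 on T̃ᶜ. Partition T0ᶜ into blocks T1, T2, … of size ak by decreasing magnitude of h and set T01 = T0 ∪ T1. If √(1−δ_{(a+1)k}) − (γ/√a)·√(1+δ_{ak}) > 0, then ‖h_{T01}‖₂ ≤ (2ε + 2·(√(1+δ_{ak})/√(ak))·(ω·‖x_{T0ᶜ}‖₁ + (1−ω)·‖x_{T̃ᶜ∩T0ᶜ}‖₁)) / (√(1−δ_{(a+1)k}) − (γ/√a)·√(1+δ_{ak})). -/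

import Mathlib

open scoped BigOperators

noncomputable section

/-- The ℓ1 norm of a finite real vector. -/
def l1norm {ι : Type*} [Fintype ι] (v : ι → ℝ) : ℝ := ∑ i, |v i|

/-- The Euclidean (ℓ2) norm of a finite real vector. -/
def l2norm {ι : Type*} [Fintype ι] (v : ι → ℝ) : ℝ := Real.sqrt (∑ i, (v i) ^ 2)

/-- The ℓ∞ norm of a finite real vector. -/
def linfnorm {ι : Type*} [Fintype ι] (v : ι → ℝ) : ℝ := ⨆ i, |v i|

/-- The weighted ℓ1 norm `‖v‖_{1,w} = ∑ i, w i * |v i|`. -/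
def wl1norm {ι : Type*} [Fintype ι] (w v : ι → ℝ) : ℝ := ∑ i, w i * |v i|

/-- `restrict v S` is the vector equal to `v` on `S` and zero outside `S`. -/
def restrict {ι : Type*} [DecidableEq ι] (v : ι → ℝ) (S : Finset ι) : ι → ℝ :=
  fun i => if i ∈ S then v i else 0

/-- A vector is `m`-sparse if it has at most `m` nonzero entries. -/
def IsSparse {ι : Type*} [Fintype ι] (m : ℕ) (v : ι → ℝ) : Prop :=
  (Finset.univ.filter (fun i => v i ≠ 0)).card ≤ m

/-- The restricted isometry constant `δ_m` of a matrix `A`: the smallest `δ ≥ 0` such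
that `(1-δ)‖u‖₂² ≤ ‖Au‖₂² ≤ (1+δ)‖u‖₂²` for every `m`-sparse vector `u`. -/
def ripConst {n N : ℕ} (A : Matrix (Fin n) (Fin N) ℝ) (m : ℕ) : ℝ :=
  sInf {δ : ℝ | 0 ≤ δ ∧ ∀ u : Fin N → ℝ, IsSparse m u →
    (1 - δ) * (∑ i, (u i) ^ 2) ≤ (∑ j, (A.mulVec u j) ^ 2) ∧
    (∑ j, (A.mulVec u j) ^ 2) ≤ (1 + δ) * (∑ i, (u i) ^ 2)}

end


/-!
Let `B` collect the `ak` largest entries of `h` off `T0` and `S = T0 ∪ B`. Peeling `T0ᶜ \ B` into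
successive blocks of the `ak` largest remaining entries, each block has `ℓ2` norm at most
`1/√(ak)` times the `ℓ1` norm of the previous one, so the upper RIP bound gives
`‖A h_{Sᶜ}‖₂ ≤ √(1+δ_{ak}) ‖h_{T0ᶜ}‖₁ / √(ak)`; with `‖Ah‖₂ ≤ 2ε` the lower RIP bound on `S`
yields `√(1-δ_{(a+1)k}) ‖h_S‖₂ ≤ 2ε + √(1+δ_{ak}) ‖h_{T0ᶜ}‖₁ / √(ak)`.
The weighted cone constraint bounds `‖h_{T0ᶜ}‖₁` by `ω ‖h_{T0}‖₁ + (1-ω) ‖h_{T0 ∆ T̃}‖₁` plus the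
`x`-terms, and Cauchy–Schwarz turns these into `√k ‖h_S‖₂` and `√((1+ρ-2αρ)k) ‖h_S‖₂`; here
`|T̃ \ T0| ≤ ak` makes `h` on `T̃ \ T0` dominated by `h` on `B`. Solving the resulting linear
inequality for `‖h_S‖₂ ≥ ‖h_{T0 ∪ T1}‖₂` gives the bound.
-/

open Finset hiding restrict
open scoped Matrix

section Vectors

variable {ι : Type*}

theorem sum_abs_le_sqrt_card_mul (v : ι → ℝ) (s : Finset ι) :
    ∑ i ∈ s, |v i| ≤ √(#s : ℝ) * √(∑ i ∈ s, v i ^ 2) := by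
  rw [← Real.sqrt_mul (Nat.cast_nonneg _)]
  apply Real.le_sqrt_of_sq_le
  simpa only [sq_abs] using sq_sum_le_card_mul_sum_sq (s := s) (f := fun i => |v i|)

theorem restrict_eq_add_restrict_sdiff [DecidableEq ι] (v : ι → ℝ) {s t : Finset ι}
    (hts : t ⊆ s) : restrict v s = restrict v t + restrict v (s \ t) := by
  ext i
  by_cases hi : i ∈ t
  · simp [restrict, hi, hts hi]
  · simp [restrict, hi]

variable [Fintype ι]

theorem l2norm_eq_norm_toLp (v : ι → ℝ) :
    l2norm v = ‖(WithLp.toLp 2 v : EuclideanSpace ℝ ι)‖ := by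
  simp [l2norm, EuclideanSpace.norm_eq]

theorem l2norm_add_le (u v : ι → ℝ) : l2norm (u + v) ≤ l2norm u + l2norm v := by
  simpa only [l2norm_eq_norm_toLp, WithLp.toLp_add] using norm_add_le _ _

theorem l2norm_sub_le (u v : ι → ℝ) : l2norm (u - v) ≤ l2norm u + l2norm v := by
  simpa only [l2norm_eq_norm_toLp, WithLp.toLp_sub] using norm_sub_le _ _

variable [DecidableEq ι]

theorem l2norm_restrict (v : ι → ℝ) (s : Finset ι) :
    l2norm (restrict v s) = √(∑ i ∈ s, v i ^ 2) := by
  simp [l2norm, restrict, ite_pow, sum_ite_mem]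

theorem l1norm_restrict (v : ι → ℝ) (s : Finset ι) :
    l1norm (restrict v s) = ∑ i ∈ s, |v i| := by
  simp [l1norm, restrict, apply_ite, sum_ite_mem]

theorem restrict_add_restrict_compl (v : ι → ℝ) (s : Finset ι) :
    restrict v s + restrict v sᶜ = v := by
  ext i
  by_cases hi : i ∈ s <;> simp [restrict, hi]

theorem isSparse_restrict {m : ℕ} (v : ι → ℝ) {s : Finset ι} (hs : #s ≤ m) :
    IsSparse m (restrict v s) := by
  refine le_trans (card_le_card fun i hi => ?_) hs
  by_contra his
  simp [restrict, his] at hi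

end Vectors

section RIP

variable {n N : ℕ} (A : Matrix (Fin n) (Fin N) ℝ) (m : ℕ)

theorem sum_sq_mulVec_le (u : Fin N → ℝ) :
    ∑ j, (A *ᵥ u) j ^ 2 ≤ (∑ j, ∑ i, A j i ^ 2) * ∑ i, u i ^ 2 := by
  rw [sum_mul]
  gcongr with j
  simpa [Matrix.mulVec, dotProduct] using sum_mul_sq_le_sq_mul_sq univ (A j) u

theorem ripConst_spec {u : Fin N → ℝ} (hu : IsSparse m u) :
    (1 - ripConst A m) * ∑ i, u i ^ 2 ≤ ∑ j, (A *ᵥ u) j ^ 2 ∧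
      ∑ j, (A *ᵥ u) j ^ 2 ≤ (1 + ripConst A m) * ∑ i, u i ^ 2 := by
  refine (show ripConst A m ∈ _ from IsClosed.csInf_mem ?_ ?_ ?_).2 u hu
  · simp only [Set.ofPred_and, Set.ofPred_forall]
    exact (isClosed_le continuous_const continuous_id).inter <| isClosed_iInter fun _ =>
      isClosed_iInter fun _ => (isClosed_le (by fun_prop) (by fun_prop)).inter
        (isClosed_le (by fun_prop) (by fun_prop))
  · -- `‖Au‖₂² ≤ ‖A‖_F² ‖u‖₂²` makes `1 + ‖A‖_F²` admissible
    have hF : 0 ≤ ∑ j, ∑ i, A j i ^ 2 := by positivity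
    refine ⟨1 + ∑ j, ∑ i, A j i ^ 2, by positivity, fun u _ => ⟨?_, ?_⟩⟩ <;>
      nlinarith [sum_sq_mulVec_le A u, (by positivity : 0 ≤ ∑ i, u i ^ 2),
        (by positivity : 0 ≤ ∑ j, (A *ᵥ u) j ^ 2)]
  · exact ⟨0, fun δ hδ => hδ.1⟩

theorem sqrt_one_sub_ripConst_mul_l2norm_le {u : Fin N → ℝ} (hu : IsSparse m u) :
    √(1 - ripConst A m) * l2norm u ≤ l2norm (A *ᵥ u) := by
  rw [l2norm, l2norm, ← Real.sqrt_mul' _ (by positivity)]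
  exact Real.sqrt_le_sqrt (ripConst_spec A m hu).1

theorem l2norm_mulVec_le_of_isSparse {u : Fin N → ℝ} (hu : IsSparse m u) :
    l2norm (A *ᵥ u) ≤ √(1 + ripConst A m) * l2norm u := by
  rw [l2norm, l2norm, ← Real.sqrt_mul' _ (by positivity)]
  exact Real.sqrt_le_sqrt (ripConst_spec A m hu).2

end RIP

section TopSet

variable {ι : Type*} [DecidableEq ι]

def IsTopSet {α : Type*} [LE α] (f : ι → α) (s B : Finset ι) : Prop :=
  B ⊆ s ∧ ∀ i ∈ B, ∀ j ∈ s \ B, f j ≤ f i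

theorem exists_isTopSet {α : Type*} [LinearOrder α] (f : ι → α) (s : Finset ι) (m : ℕ) :
    ∃ B, IsTopSet f s B ∧ #B = min m #s := by
  induction m with
  | zero => exact ⟨∅, ⟨empty_subset s, by simp⟩, by simp⟩
  | succ m ih =>
    obtain ⟨B, ⟨hBs, hBtop⟩, hBcard⟩ := ih
    rcases (s \ B).eq_empty_or_nonempty with hrest | hrest
    · have hBeq : B = s := hBs.antisymm (sdiff_eq_empty_iff_subset.mp hrest)
      refine ⟨B, ⟨hBs, hBtop⟩, ?_⟩
      subst hBeq
      omega
    obtain ⟨j₀, hj₀, hj₀max⟩ := (s \ B).exists_max_image f hrest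
    have hj₀B : j₀ ∉ B := (mem_sdiff.mp hj₀).2
    refine ⟨insert j₀ B, ⟨insert_subset (mem_sdiff.mp hj₀).1 hBs, ?_⟩, ?_⟩
    · intro i hi j hj
      have hj' : j ∈ s \ B := by
        simp only [mem_sdiff, mem_insert, not_or] at hj ⊢
        exact ⟨hj.1, hj.2.2⟩
      rcases mem_insert.mp hi with rfl | hi
      · exact hj₀max j hj'
      · exact hBtop i hi j hj'
    · have : #B < #s := card_lt_card ((ssubset_iff_of_subset hBs).mpr ⟨j₀, mem_sdiff.mp hj₀⟩)
      rw [card_insert_of_notMem hj₀B]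
      omega

theorem IsTopSet.mul_abs_le_sum {v : ι → ℝ} {s B : Finset ι} {m : ℕ}
    (hB : IsTopSet (|v ·|) s B) (hBcard : #B = min m #s) {j : ι} (hj : j ∈ s \ B) :
    m * |v j| ≤ ∑ i ∈ B, |v i| := by
  have : #B < #s := card_lt_card ((ssubset_iff_of_subset hB.1).mpr ⟨j, mem_sdiff.mp hj⟩)
  rw [show m = #B by omega, ← nsmul_eq_mul]
  exact card_nsmul_le_sum _ _ _ fun i hi => hB.2 i hi j hj

theorem IsTopSet.sum_sq_le {v : ι → ℝ} {s B U : Finset ι} {m : ℕ} (hB : IsTopSet (|v ·|) s B)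
    (hBcard : #B = min m #s) (hUs : U ⊆ s) (hUm : #U ≤ m) :
    ∑ i ∈ U, v i ^ 2 ≤ ∑ i ∈ B, v i ^ 2 := by
  have hUB : #U ≤ #B := hBcard ▸ le_min hUm (card_le_card hUs)
  have hcard : #(U \ B) ≤ #(B \ U) := by
    have := card_sdiff_add_card_inter U B
    have := card_sdiff_add_card_inter B U
    rw [inter_comm] at this
    omega
  suffices hout : ∑ i ∈ U \ B, v i ^ 2 ≤ ∑ i ∈ B \ U, v i ^ 2 by
    rw [← sum_inter_add_sum_sdiff U B, ← sum_inter_add_sum_sdiff B U, inter_comm]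
    linarith
  rcases (B \ U).eq_empty_or_nonempty with hBU | hBU
  · rw [hBU, card_empty, Nat.le_zero, card_eq_zero] at hcard
    simp [hBU, hcard]
  -- every square on `U \ B` is at most the smallest one on `B \ U`, and `#(U \ B) ≤ #(B \ U)`
  obtain ⟨i₀, hi₀, hi₀min⟩ := (B \ U).exists_min_image (v · ^ 2) hBU
  calc ∑ i ∈ U \ B, v i ^ 2 ≤ #(U \ B) • v i₀ ^ 2 := by
        refine sum_le_card_nsmul _ _ _ fun j hj => sq_le_sq.mpr ?_
        exact hB.2 i₀ (mem_sdiff.mp hi₀).1 j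
          (mem_sdiff.mpr ⟨hUs (mem_sdiff.mp hj).1, (mem_sdiff.mp hj).2⟩)
    _ ≤ #(B \ U) • v i₀ ^ 2 := nsmul_le_nsmul_left (sq_nonneg _) hcard
    _ ≤ ∑ i ∈ B \ U, v i ^ 2 := card_nsmul_le_sum _ _ _ hi₀min

end TopSet

section Tail

variable {ι κ : Type*} [Fintype ι] [DecidableEq ι] [Fintype κ]

theorem l2norm_restrict_le_of_mul_abs_le {m : ℕ} (hm : 0 < m) (v : ι → ℝ) {s : Finset ι}
    {L : ℝ} (hL : 0 ≤ L) (hs : #s ≤ m) (hv : ∀ i ∈ s, m * |v i| ≤ L) :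
    l2norm (restrict v s) ≤ L / √(m : ℝ) := by
  have hm' : (0 : ℝ) < m := Nat.cast_pos.mpr hm
  have hsq : ∀ i ∈ s, (m : ℝ) ^ 2 * v i ^ 2 ≤ L ^ 2 := fun i hi => by
    rw [← sq_abs (v i), ← mul_pow]
    exact pow_le_pow_left₀ (by positivity) (hv i hi) 2
  have hsum : (m : ℝ) ^ 2 * ∑ i ∈ s, v i ^ 2 ≤ m * L ^ 2 := by
    calc (m : ℝ) ^ 2 * ∑ i ∈ s, v i ^ 2 ≤ #s • L ^ 2 := by
          rw [mul_sum]; exact sum_le_card_nsmul _ _ _ hsq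
      _ ≤ m * L ^ 2 := by
          rw [nsmul_eq_mul]; gcongr
  rw [l2norm_restrict, ← Real.sqrt_sq hL, ← Real.sqrt_div' _ hm'.le]
  refine Real.sqrt_le_sqrt ((le_div_iff₀ hm').mpr ?_)
  nlinarith

/-- Shifting inequality. Peel `s` into successive blocks of its `m` largest remaining entries:
each block has `ℓ2` norm at most `1/√m` times the `ℓ1` norm of the block before it, and `L`
bounds the first block in the same way. -/
theorem l2norm_mulVec_restrict_le (A : Matrix κ ι ℝ) {m : ℕ} (hm : 0 < m) {c : ℝ} (hc : 0 ≤ c)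
    (hA : ∀ u, IsSparse m u → l2norm (A *ᵥ u) ≤ c * l2norm u) (v : ι → ℝ) (s : Finset ι)
    {L : ℝ} (hL : 0 ≤ L) (hv : ∀ i ∈ s, m * |v i| ≤ L) :
    l2norm (A *ᵥ restrict v s) ≤ c * (L + ∑ i ∈ s, |v i|) / √(m : ℝ) := by
  induction s using Finset.strongInduction generalizing L with
  | H s ih =>
  rcases s.eq_empty_or_nonempty with rfl | hs
  · have : restrict v ∅ = 0 := by ext i; simp [restrict]
    simp only [this, Matrix.mulVec_zero, sum_empty, add_zero]
    simp [l2norm]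
    positivity
  obtain ⟨B, hB, hBcard⟩ := exists_isTopSet (|v ·|) s m
  have hBne : B.Nonempty := card_pos.mp (by rw [hBcard]; exact lt_min hm (card_pos.mpr hs))
  have hBm : #B ≤ m := hBcard ▸ min_le_left _ _
  have hhead := l2norm_restrict_le_of_mul_abs_le hm v hL hBm fun i hi => hv i (hB.1 hi)
  have htail := ih (s \ B) (sdiff_ssubset hB.1 hBne) (by positivity) fun j hj =>
    hB.mul_abs_le_sum hBcard hj
  rw [← sum_sdiff hB.1, restrict_eq_add_restrict_sdiff v hB.1, Matrix.mulVec_add]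
  calc _ ≤ l2norm (A *ᵥ restrict v B) + l2norm (A *ᵥ restrict v (s \ B)) := l2norm_add_le _ _
    _ ≤ c * (L / √(m : ℝ)) + c * (∑ i ∈ B, |v i| + ∑ i ∈ s \ B, |v i|) / √(m : ℝ) := by
        gcongr
        exact (hA _ (isSparse_restrict v hBm)).trans (by gcongr)
    _ = _ := by ring

end Tail

section Cone

variable {ι : Type*} [DecidableEq ι]

theorem sum_mul_abs_eq_of_weight {w : ι → ℝ} {t : Finset ι} {ω : ℝ}
    (hw : ∀ i, w i = if i ∈ t then ω else 1) (v : ι → ℝ) (s : Finset ι) :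
    ∑ i ∈ s, w i * |v i| = ω * ∑ i ∈ s, |v i| + (1 - ω) * ∑ i ∈ s \ t, |v i| := by
  have hin : ∑ i ∈ s ∩ t, w i * |v i| = ω * ∑ i ∈ s ∩ t, |v i| := by
    rw [mul_sum]
    exact sum_congr rfl fun i hi => by rw [hw, if_pos (mem_inter.mp hi).2]
  have hout : ∑ i ∈ s \ t, w i * |v i| = ∑ i ∈ s \ t, |v i| :=
    sum_congr rfl fun i hi => by rw [hw, if_neg (mem_sdiff.mp hi).2, one_mul]
  rw [← sum_inter_add_sum_sdiff s t (fun i => w i * |v i|), hin, hout,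
    ← sum_inter_add_sum_sdiff s t (fun i => |v i|)]
  ring

theorem card_sdiff_union_sdiff_add (s t : Finset ι) :
    #(s \ t ∪ t \ s) + 2 * #(t ∩ s) = #s + #t := by
  have hs := card_sdiff_add_card_inter s t
  have ht := card_sdiff_add_card_inter t s
  rw [inter_comm] at hs
  rw [card_union_of_disjoint disjoint_sdiff_sdiff]
  omega

variable [Fintype ι]

theorem sum_compl_mul_abs_le_of_wl1norm_add_le {w x h : ι → ℝ} (hw : ∀ i, 0 ≤ w i)
    (hcone : wl1norm w (x + h) ≤ wl1norm w x) (s : Finset ι) :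
    ∑ i ∈ sᶜ, w i * |h i| ≤ ∑ i ∈ s, w i * |h i| + 2 * ∑ i ∈ sᶜ, w i * |x i| := by
  have hin : ∑ i ∈ s, (w i * |x i| - w i * |h i|) ≤ ∑ i ∈ s, w i * |x i + h i| :=
    sum_le_sum fun i _ => by
      rw [← mul_sub]; exact mul_le_mul_of_nonneg_left (abs_sub_abs_le_abs_add _ _) (hw i)
  have hout : ∑ i ∈ sᶜ, (w i * |h i| - w i * |x i|) ≤ ∑ i ∈ sᶜ, w i * |x i + h i| :=
    sum_le_sum fun i _ => by
      rw [← mul_sub, add_comm]; exact mul_le_mul_of_nonneg_left (abs_sub_abs_le_abs_add _ _) (hw i)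
  have hxh := sum_add_sum_compl s fun i => w i * |x i + h i|
  have hx := sum_add_sum_compl s fun i => w i * |x i|
  simp only [wl1norm, Pi.add_apply] at hcone
  rw [sum_sub_distrib] at hin hout
  linarith

theorem sum_compl_abs_le_of_weighted_cone {w x h : ι → ℝ} {s t : Finset ι} {ω : ℝ}
    (hω0 : 0 ≤ ω) (hw : ∀ i, w i = if i ∈ t then ω else 1)
    (hcone : wl1norm w (x + h) ≤ wl1norm w x) :
    ∑ i ∈ sᶜ, |h i| ≤ ω * ∑ i ∈ s, |h i| + (1 - ω) * ∑ i ∈ s \ t ∪ t \ s, |h i| +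
      2 * (ω * ∑ i ∈ sᶜ, |x i| + (1 - ω) * ∑ i ∈ sᶜ \ t, |x i|) := by
  have hw0 : ∀ i, 0 ≤ w i := fun i => by rw [hw]; split_ifs <;> linarith
  have key := sum_compl_mul_abs_le_of_wl1norm_add_le hw0 hcone s
  simp only [sum_mul_abs_eq_of_weight hw] at key
  have hsymm : ∑ i ∈ s \ t ∪ t \ s, |h i| = ∑ i ∈ s \ t, |h i| + ∑ i ∈ t \ s, |h i| :=
    sum_union disjoint_sdiff_sdiff
  have hcompl : ∑ i ∈ sᶜ, |h i| = ∑ i ∈ t \ s, |h i| + ∑ i ∈ sᶜ \ t, |h i| := by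
    rw [← sum_inter_add_sum_sdiff sᶜ t, inter_comm, ← sdiff_eq_inter_compl]
  rw [hsymm]
  linear_combination key + (1 - ω) * hcompl

end Cone

section Assembly

variable {ι : Type*} [Fintype ι] [DecidableEq ι]

theorem sum_abs_le_sqrt_card_mul_l2norm_restrict (v : ι → ℝ) {U S : Finset ι}
    (hUS : ∑ i ∈ U, v i ^ 2 ≤ ∑ i ∈ S, v i ^ 2) :
    ∑ i ∈ U, |v i| ≤ √(#U : ℝ) * l2norm (restrict v S) :=
  (sum_abs_le_sqrt_card_mul v U).trans (by rw [l2norm_restrict]; gcongr)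

theorem IsTopSet.l2norm_restrict_union_le {v : ι → ℝ} {T0 B U : Finset ι} {m : ℕ}
    (hB : IsTopSet (|v ·|) T0ᶜ B) (hBcard : #B = min m #T0ᶜ) (hU : U ⊆ T0ᶜ) (hUm : #U ≤ m) :
    l2norm (restrict v (T0 ∪ U)) ≤ l2norm (restrict v (T0 ∪ B)) := by
  rw [l2norm_restrict, l2norm_restrict, sum_union (le_compl_iff_disjoint_left.mp hU),
    sum_union (le_compl_iff_disjoint_left.mp hB.1)]
  exact Real.sqrt_le_sqrt (by linarith [hB.sum_sq_le hBcard hU hUm])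

theorem sum_compl_abs_le_of_weighted_cone_of_isTopSet {x h w : ι → ℝ} {T0 Tt B : Finset ι}
    {ω β : ℝ} {k m : ℕ} (hω0 : 0 ≤ ω) (hω1 : ω ≤ 1) (hw : ∀ i, w i = if i ∈ Tt then ω else 1)
    (hcone : wl1norm w (x + h) ≤ wl1norm w x) (hB : IsTopSet (|h ·|) T0ᶜ B)
    (hBcard : #B = min m #T0ᶜ) (hT0 : #T0 = k) (hTt : #(Tt \ T0) ≤ m)
    (hD : (#(T0 \ Tt ∪ Tt \ T0) : ℝ) = β * k) :
    ∑ i ∈ T0ᶜ, |h i| ≤ (ω + (1 - ω) * √β) * √(k : ℝ) * l2norm (restrict h (T0 ∪ B)) +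
      2 * (ω * ∑ i ∈ T0ᶜ, |x i| + (1 - ω) * ∑ i ∈ T0ᶜ \ Tt, |x i|) := by
  have hS : ∑ i ∈ T0 ∪ B, h i ^ 2 = ∑ i ∈ T0, h i ^ 2 + ∑ i ∈ B, h i ^ 2 :=
    sum_union (le_compl_iff_disjoint_left.mp hB.1)
  have hT0sum : ∑ i ∈ T0, |h i| ≤ √(k : ℝ) * l2norm (restrict h (T0 ∪ B)) := by
    refine hT0 ▸ sum_abs_le_sqrt_card_mul_l2norm_restrict h ?_
    rw [hS]
    exact le_add_of_nonneg_right (by positivity)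
  have hDsum : ∑ i ∈ T0 \ Tt ∪ Tt \ T0, |h i| ≤ √β * √(k : ℝ) * l2norm (restrict h (T0 ∪ B)) := by
    rw [← Real.sqrt_mul' _ (Nat.cast_nonneg k), ← hD]
    refine sum_abs_le_sqrt_card_mul_l2norm_restrict h ?_
    rw [sum_union disjoint_sdiff_sdiff, hS]
    gcongr ?_ + ?_
    · exact sum_le_sum_of_subset_of_nonneg sdiff_subset fun i _ _ => sq_nonneg (h i)
    · exact hB.sum_sq_le hBcard (fun i hi => mem_compl.mpr (mem_sdiff.mp hi).2) hTt
  have hcone' := sum_compl_abs_le_of_weighted_cone (s := T0) hω0 hw hcone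
  have := mul_le_mul_of_nonneg_left hT0sum hω0
  have := mul_le_mul_of_nonneg_left hDsum (sub_nonneg.mpr hω1)
  linarith

theorem sqrt_one_sub_ripConst_mul_l2norm_restrict_le {n N : ℕ} (A : Matrix (Fin n) (Fin N) ℝ)
    (h : Fin N → ℝ) {T0 B : Finset (Fin N)} {k m : ℕ} (hm : 0 < m) (hT0 : #T0 ≤ k)
    (hB : IsTopSet (|h ·|) T0ᶜ B) (hBcard : #B = min m #T0ᶜ) :
    √(1 - ripConst A (m + k)) * l2norm (restrict h (T0 ∪ B)) ≤
      l2norm (A *ᵥ h) + √(1 + ripConst A m) * (∑ i ∈ T0ᶜ, |h i|) / √(m : ℝ) := by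
  have hSc : (T0 ∪ B)ᶜ = T0ᶜ \ B := by rw [compl_union, sdiff_eq_inter_compl]
  have hBm : #B ≤ m := hBcard ▸ min_le_left _ _
  have hsparse : IsSparse (m + k) (restrict h (T0 ∪ B)) :=
    isSparse_restrict h ((card_union_le _ _).trans (by omega))
  have htail := l2norm_mulVec_restrict_le A hm (Real.sqrt_nonneg _)
    (fun u hu => l2norm_mulVec_le_of_isSparse A m hu) h (T0 ∪ B)ᶜ (L := ∑ i ∈ B, |h i|)
    (by positivity) fun j hj => hB.mul_abs_le_sum hBcard (hSc ▸ hj)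
  calc _ ≤ l2norm (A *ᵥ restrict h (T0 ∪ B)) := sqrt_one_sub_ripConst_mul_l2norm_le A _ hsparse
    _ = l2norm (A *ᵥ h - A *ᵥ restrict h (T0 ∪ B)ᶜ) := by
        rw [← Matrix.mulVec_sub, eq_sub_of_add_eq (restrict_add_restrict_compl h (T0 ∪ B))]
    _ ≤ l2norm (A *ᵥ h) + l2norm (A *ᵥ restrict h (T0 ∪ B)ᶜ) := l2norm_sub_le _ _
    _ ≤ _ := by gcongr; rwa [hSc, add_comm (∑ i ∈ B, |h i|), sum_sdiff hB.1, ← hSc] at htail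

theorem le_div_of_le_add_of_le {y σ X ε c d γ a k : ℝ} (ha : 0 < a) (hk : 0 < k) (hc : 0 ≤ c)
    (hden : 0 < d - γ / √a * c) (hrip : d * y ≤ 2 * ε + c * σ / √(a * k))
    (hσ : σ ≤ γ * √k * y + 2 * X) :
    y ≤ (2 * ε + 2 * (c / √(a * k)) * X) / (d - γ / √a * c) := by
  have hak : √(a * k) = √a * √k := Real.sqrt_mul ha.le k
  have hσ' : c * σ / √(a * k) ≤ c * (γ * √k * y + 2 * X) / √(a * k) := by gcongr
  have hid : c * (γ * √k * y + 2 * X) / √(a * k) = γ / √a * c * y + 2 * (c / √(a * k)) * X := by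
    rw [hak]
    field_simp
  rw [le_div_iff₀ hden]
  linarith

end Assembly

theorem hT01_bound_general
    {n N : ℕ} (A : Matrix (Fin n) (Fin N) ℝ)
    (x h : Fin N → ℝ) (T0 Tt : Finset (Fin N)) (T : ℕ → Finset (Fin N))
    (k ak : ℕ) (a ρ α ω ε γ δak δa1k : ℝ) (w : Fin N → ℝ)
    (ha : 1 < a) (hk : 1 ≤ k) (hak : (ak : ℝ) = a * k)
    -- `δak` and `δa1k` are the restricted isometry constants of `A` at levels `ak`, `(a+1)k`
    (hδak : δak = ripConst A ak)
    (hδa1k : δa1k = ripConst A (ak + k))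
    -- cardinalities: `|T0| = k`, `|T̃| = ρk`, `|T̃ ∩ T0| = αρk`, and `a ≥ (1-α)ρ`
    (hT0card : T0.card = k)
    (hTtcard : (Tt.card : ℝ) = ρ * k)
    (hTtT0card : ((Tt ∩ T0).card : ℝ) = α * ρ * k)
    (haαρ : (1 - α) * ρ ≤ a)
    -- the weight `ω ∈ [0,1]` and `γ = ω + (1-ω)√(1+ρ-2αρ)`
    (hω0 : 0 ≤ ω) (hω1 : ω ≤ 1)
    (hγ : γ = ω + (1 - ω) * Real.sqrt (1 + ρ - 2 * α * ρ))
    -- `‖Ah‖₂ ≤ 2ε`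
    (hAh : l2norm (A.mulVec h) ≤ 2 * ε)
    -- the weighted ℓ1 cone constraint with weights `ω` on `Tt`, `1` on `Ttᶜ`
    (hw : ∀ i, w i = if i ∈ Tt then ω else 1)
    (hcone : wl1norm w (x + h) ≤ wl1norm w x)
    -- the `T j`, `j ≥ 1`, partition `T0ᶜ` into blocks of size at most `ak`
    (hcover : ∀ i : Fin N, i ∈ T0ᶜ ↔ ∃ j, 1 ≤ j ∧ i ∈ T j)
    (hcard : ∀ j, 1 ≤ j → (T j).card ≤ ak)
    -- the denominator is positive
    (hden : 0 < Real.sqrt (1 - δa1k) - (γ / Real.sqrt a) * Real.sqrt (1 + δak)) :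
    l2norm (restrict h (T0 ∪ T 1)) ≤
      (2 * ε + 2 * (Real.sqrt (1 + δak) / Real.sqrt ((ak : ℝ)))
          * (ω * l1norm (restrict x T0ᶜ) + (1 - ω) * l1norm (restrict x (Ttᶜ ∩ T0ᶜ))))
        / (Real.sqrt (1 - δa1k) - (γ / Real.sqrt a) * Real.sqrt (1 + δak)) := by
  have hk0 : (0 : ℝ) < k := by exact_mod_cast hk
  have ha0 : 0 < a := by linarith
  have hak0 : 0 < ak := by exact_mod_cast (hak ▸ mul_pos ha0 hk0 : (0 : ℝ) < ak)
  -- The given blocks `T j` may hold fewer than `ak` entries, so the argument runs with a set `B`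
  -- of the `ak` largest entries of `h` off `T0`; `T 1` enters only through `‖h_{T 1}‖₂ ≤ ‖h_B‖₂`.
  obtain ⟨B, hB, hBcard⟩ := exists_isTopSet (|h ·|) T0ᶜ ak
  have hT01 := hB.l2norm_restrict_union_le hBcard (fun i hi => (hcover i).mpr ⟨1, le_rfl, hi⟩)
    (hcard 1 le_rfl)
  have hrip := sqrt_one_sub_ripConst_mul_l2norm_restrict_le A h hak0 hT0card.le hB hBcard
  rw [← hδak, ← hδa1k, hak] at hrip
  have hTt : #(Tt \ T0) ≤ ak := by
    have hsplit : (#(Tt \ T0) : ℝ) + #(Tt ∩ T0) = #Tt := by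
      exact_mod_cast card_sdiff_add_card_inter Tt T0
    have : (#(Tt \ T0) : ℝ) ≤ ak := by
      rw [hak]
      linarith [mul_le_mul_of_nonneg_right haαρ hk0.le]
    exact_mod_cast this
  -- `T0 \ Tt ∪ Tt \ T0` is the paper's `(T0 ∪ T̃) \ T̃_α`
  have hD : (#(T0 \ Tt ∪ Tt \ T0) : ℝ) = (1 + ρ - 2 * α * ρ) * k := by
    have hc : (#(T0 \ Tt ∪ Tt \ T0) : ℝ) + 2 * #(Tt ∩ T0) = #T0 + #Tt := by
      exact_mod_cast card_sdiff_union_sdiff_add T0 Tt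
    rw [hT0card] at hc
    linarith
  have hl1 :=
    sum_compl_abs_le_of_weighted_cone_of_isTopSet hω0 hω1 hw hcone hB hBcard hT0card hTt hD
  rw [← hγ] at hl1
  rw [l1norm_restrict, l1norm_restrict, inter_comm, ← sdiff_eq_inter_compl, hak]
  exact hT01.trans (le_div_of_le_add_of_le ha0 hk0 (Real.sqrt_nonneg _) hden
    (hrip.trans (by linarith)) hl1)

/-- the bound (13) of the paper on `‖h_{T01}‖₂`, combining feasibility,
the weighted ℓ1 cone constraint, the RIP, and the cardinality fact
`|(T0 ∪ T̃) \ T̃_α| = (1+ρ-2αρ)k`, where `T̃_α = T0 ∩ T̃` and `T01 = T0 ∪ T 1`. -/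
theorem hT01_bound
    {n N : ℕ} (A : Matrix (Fin n) (Fin N) ℝ)
    (x h : Fin N → ℝ) (T0 Tt : Finset (Fin N)) (T : ℕ → Finset (Fin N))
    (k ak : ℕ) (a ρ α ω ε γ δak δa1k : ℝ) (w : Fin N → ℝ)
    (ha : 1 < a) (hk : 1 ≤ k) (hak : (ak : ℝ) = a * k)
    -- `δak` and `δa1k` are the restricted isometry constants of `A` at levels `ak`, `(a+1)k`
    (hδak : δak = ripConst A ak)
    (hδa1k : δa1k = ripConst A (ak + k))
    -- cardinalities: `|T0| = k`, `|T̃| = ρk`, `|T̃ ∩ T0| = αρk`, and `a ≥ (1-α)ρ`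
    (hT0card : T0.card = k)
    (hTtcard : (Tt.card : ℝ) = ρ * k)
    (hTtT0card : ((Tt ∩ T0).card : ℝ) = α * ρ * k)
    (haαρ : (1 - α) * ρ ≤ a)
    -- the weight `ω ∈ [0,1]` and `γ = ω + (1-ω)√(1+ρ-2αρ)`
    (hω0 : 0 ≤ ω) (hω1 : ω ≤ 1)
    (hγ : γ = ω + (1 - ω) * Real.sqrt (1 + ρ - 2 * α * ρ))
    -- `‖Ah‖₂ ≤ 2ε`
    (hAh : l2norm (A.mulVec h) ≤ 2 * ε)
    -- the weighted ℓ1 cone constraint with weights `ω` on `Tt`, `1` on `Ttᶜ`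
    (hw : ∀ i, w i = if i ∈ Tt then ω else 1)
    (hcone : wl1norm w (x + h) ≤ wl1norm w x)
    -- the `T j`, `j ≥ 1`, are pairwise disjoint and partition `T0ᶜ` into blocks of size
    -- at most `ak`, sorted by decreasing magnitude of the entries of `h`
    (hdisj : ∀ i j, 1 ≤ i → 1 ≤ j → i ≠ j → Disjoint (T i) (T j))
    (hcover : ∀ i : Fin N, i ∈ T0ᶜ ↔ ∃ j, 1 ≤ j ∧ i ∈ T j)
    (hcard : ∀ j, 1 ≤ j → (T j).card ≤ ak)
    (horder : ∀ j, 1 ≤ j → ∀ i ∈ T j, ∀ i' ∈ T (j + 1), |h i'| ≤ |h i|)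
    -- the denominator is positive
    (hden : 0 < Real.sqrt (1 - δa1k) - (γ / Real.sqrt a) * Real.sqrt (1 + δak)) :
    l2norm (restrict h (T0 ∪ T 1)) ≤
      (2 * ε + 2 * (Real.sqrt (1 + δak) / Real.sqrt ((ak : ℝ)))
          * (ω * l1norm (restrict x T0ᶜ) + (1 - ω) * l1norm (restrict x (Ttᶜ ∩ T0ᶜ))))
        / (Real.sqrt (1 - δa1k) - (γ / Real.sqrt a) * Real.sqrt (1 + δak)) :=
  hT01_bound_general A x h T0 Tt T k ak a ρ α ω ε γ δak δa1k w ha hk hak hδak hδa1k hT0card hTtcard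
    hTtT0card haαρ hω0 hω1 hγ hAh hw hcone hcover hcard hden
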